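/- arXiv:2510.12973 — 4 statements merged into one kernel-verified Lean document; each statement's English description precedes it below -/
import Mathlib

section
/- Let Γ be a finite group of order N, A a torsion-free abelian group with Γ-action, and Γ₀ ≤ Γ a subgroup such that A^{Γ₀} = 0. Let a : Γ → A be a crossed homomorphism (a(st) = a(s) + s·a(t)). Suppose there exist m, m₀ ∈ A such that a(t) = t·m − m for all t ∈ Γ₀ and N·a(s) = s·m₀ − m₀ for all s ∈ Γ. Then a is a coboundary: a(s) = s·m − m for all s ∈ Γ. In particular, the restriction map H¹(Γ, A) → H¹(Γ₀, A) is injective. -/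
/-- Let `Γ` be a finite group of order `N` acting on a torsion-free abelian group `A`, and
`Γ₀ ≤ Γ` a subgroup with `A^{Γ₀} = 0`. If a crossed homomorphism `a : Γ → A` satisfies
`a(t) = t•m - m` on `Γ₀` and `N·a(s) = s•m₀ - m₀` on all of `Γ`, then `a` is the coboundary
of `m`: `a(s) = s•m - m` for all `s ∈ Γ`. -/
theorem stmt5 (Γ : Type*) [Group Γ] [Fintype Γ] (A : Type*) [AddCommGroup A]
    [DistribMulAction Γ A]
    (htf : ∀ (n : ℤ) (x : A), n • x = 0 → n = 0 ∨ x = 0)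
    (Γ₀ : Subgroup Γ) (hfix : ∀ x : A, (∀ t ∈ Γ₀, t • x = x) → x = 0)
    (a : Γ → A) (ha : ∀ s t : Γ, a (s * t) = a s + s • a t)
    (m m₀ : A) (hm : ∀ t ∈ Γ₀, a t = t • m - m)
    (hm₀ : ∀ s : Γ, (Fintype.card Γ : ℤ) • a s = s • m₀ - m₀) :
    ∀ s : Γ, a s = s • m - m := by
  set N : ℤ := (Fintype.card Γ : ℤ) with hNdef
  have hN : N ≠ 0 := by
    simp [hNdef, Fintype.card_ne_zero]
  set x : A := m₀ - N • m with hx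
  have hxfix : ∀ t ∈ Γ₀, t • x = x := by
    intro t ht
    have h1 := hm₀ t
    rw [hm t ht] at h1
    have hc : t • (N • m) = N • (t • m) := smul_comm t N m
    rw [hx, smul_sub, hc]
    rw [smul_sub] at h1
    -- h1 : N • (t•m) - N • m = t • m₀ - m₀
    have : t • m₀ - N • (t • m) = m₀ - N • m := by linear_combination (norm := abel) -h1
    exact this
  have hx0 : x = 0 := hfix x hxfix
  intro s
  have h1 := hm₀ s
  have hm₀eq : m₀ = N • m := by
    have := sub_eq_zero.mp hx0
    exact this
  rw [hm₀eq, smul_comm s N m, ← smul_sub] at h1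
  have h2 : N • (a s - (s • m - m)) = 0 := by
    rw [smul_sub, h1, sub_self]
  rcases htf N _ h2 with h | h
  · exact absurd h hN
  · exact sub_eq_zero.mp h
end

section
/- Let k'/k be a finite Galois extension of fields with Galois group G = Gal(k'/k). Then the k-algebra homomorphism k' ⊗_k k' → ∏_{σ ∈ G} k' sending a ⊗ b to the tuple (a·σ(b))_{σ ∈ G} is an isomorphism of k-algebras (and of k'-algebras via the first factor). -/
open scoped TensorProduct

/-- For a finite Galois extension `k'/k` with Galois group `G = Gal(k'/k)`, the map
`k' ⊗[k] k' → ∏_{σ ∈ G} k'`, `a ⊗ b ↦ (a·σ(b))_σ`, is an isomorphism of `k`-algebras. -/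
theorem stmt15 (k k' : Type*) [Field k] [Field k'] [Algebra k k']
    [FiniteDimensional k k'] [IsGalois k k'] :
    ∃ e : (k' ⊗[k] k') ≃ₐ[k] ((k' ≃ₐ[k] k') → k'),
      ∀ a b : k', e (a ⊗ₜ[k] b) = fun σ => a * σ b := by
  classical
  set G := (k' ≃ₐ[k] k')
  -- the algebra hom
  let φ : (k' ⊗[k] k') →ₐ[k] (G → k') :=
    Pi.algHom k _ fun σ =>
      Algebra.TensorProduct.productMap (AlgHom.id k k') σ.toAlgHom
  have hφ : ∀ a b : k', φ (a ⊗ₜ[k] b) = fun σ => a * σ b := by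
    intro a b
    funext σ
    simp [φ, Algebra.TensorProduct.productMap_apply_tmul]
  -- surjectivity
  have hsurj : Function.Surjective φ := by
    -- first, the span over k' of the vectors (σ b)_σ is everything
    set S : Submodule k' (G → k') :=
      Submodule.span k' (Set.range fun b : k' => (fun σ : G => σ b)) with hS
    have hStop : S = ⊤ := by
      by_contra h
      obtain ⟨f, hf0, hker⟩ := S.exists_le_ker_of_lt_top (lt_top_iff_ne_top.mpr h)
      -- coefficients of the functional
      set c : G → k' := fun σ => f (Pi.single σ 1) with hc
      have hfx : ∀ x : G → k', f x = ∑ σ : G, x σ * c σ := by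
        intro x
        have : x = ∑ σ : G, x σ • (Pi.single σ (1 : k') : G → k') := by
          funext τ
          simp [Finset.sum_apply, Pi.single_apply]
        conv_lhs => rw [this]
        simp [map_sum, map_smul, smul_eq_mul, hc]
      -- each b gives a relation
      have hrel : ∀ b : k', ∑ σ : G, σ b * c σ = 0 := by
        intro b
        have hb : (fun σ : G => σ b) ∈ S := Submodule.subset_span ⟨b, rfl⟩
        have := hker hb
        rw [LinearMap.mem_ker] at this
        rw [hfx] at this
        exact this
      -- Dedekind's independence of characters
      have li : LinearIndependent k' (M := k' → k')
          (fun σ : G => (σ : k' → k')) := by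
        have := (linearIndependent_monoidHom k' k').comp
          (fun σ : G => (σ : k' ≃* k').toMonoidHom)
          (fun σ τ h => by
            ext x
            exact DFunLike.congr_fun h x)
        exact this
      have hc0 : ∀ σ : G, c σ = 0 := by
        have := Fintype.linearIndependent_iff.mp li c ?_
        · exact this
        · funext x
          simp only [Finset.sum_apply, Pi.smul_apply, smul_eq_mul, Pi.zero_apply]
          rw [← hrel x]
          exact Finset.sum_congr rfl fun σ _ => mul_comm _ _
      apply hf0
      refine LinearMap.ext fun x => ?_
      rw [hfx]
      simp [hc0]
    -- now every element of the span is in the range of φ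
    intro x
    have hx : x ∈ S := hStop ▸ Submodule.mem_top
    refine Submodule.span_induction ?_ ?_ ?_ ?_ hx
    · rintro _ ⟨b, rfl⟩
      exact ⟨1 ⊗ₜ[k] b, by rw [hφ]; funext σ; simp⟩
    · exact ⟨0, map_zero φ⟩
    · rintro x y - - ⟨u, rfl⟩ ⟨v, rfl⟩
      exact ⟨u + v, map_add φ u v⟩
    · rintro a x - ⟨u, rfl⟩
      refine ⟨(a ⊗ₜ[k] 1) * u, ?_⟩
      rw [map_mul, hφ]
      funext σ
      simp [mul_comm]
  -- injectivity via dimension count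
  have hdim : Module.finrank k (k' ⊗[k] k') = Module.finrank k (G → k') := by
    rw [Module.finrank_tensorProduct, Module.finrank_pi_fintype,
      Finset.sum_const, Finset.card_univ, smul_eq_mul, ← Nat.card_eq_fintype_card, IsGalois.card_aut_eq_finrank]
  have hinj : Function.Injective φ :=
    (LinearMap.injective_iff_surjective_of_finrank_eq_finrank
      (f := φ.toLinearMap) hdim).mpr hsurj
  exact ⟨AlgEquiv.ofBijective φ ⟨hinj, hsurj⟩, hφ⟩
end

section
/- Let Γ be a group and A a nilpotent group in which every element has p-power order. Assume that for every abelian p-torsion group B equipped with an action of Γ, one has H²(Γ, B) = 0. Let f : Γ → Aut(A) and g : Γ² → A be a nonabelian 2-cocycle pair, i.e. f(s)∘f(t) = Ad(g(s,t))∘f(st) and f(s)(g(t,u))·g(s,tu) = g(s,t)·g(st,u). Then (f,g) is equivalent to a pair of the form (f', 1), i.e. there exists h : Γ → A such that with f'(s) = Ad(h(s))∘f(s) one has h(s)·f(s)(h(t))·g(s,t)·h(st)⁻¹ = 1 for all s,t ∈ Γ; in particular f' is a group homomorphism Γ → Aut(A). -/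
universe u v

section Aux

/-- Conjugation intertwines with automorphisms. -/
lemma conj_swap {A : Type u} [Group A] (e : MulAut A) (x : A) :
    e * MulAut.conj x = MulAut.conj (e x) * e := by
  ext a; simp [MulAut.conj, mul_assoc]

lemma conj_central {A : Type u} [Group A] {z : A} (hz : z ∈ Subgroup.center A) :
    MulAut.conj z = 1 := by
  ext a
  simp only [MulAut.conj_apply, MulAut.one_apply]
  rw [Subgroup.mem_center_iff] at hz
  rw [← hz a]; group

lemma aut_center_mem {A : Type u} [Group A] (e : MulAut A) {z : A}
    (hz : z ∈ Subgroup.center A) : e z ∈ Subgroup.center A :=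
  Subgroup.characteristic_iff_le_comap.mp
    (inferInstance : (Subgroup.center A).Characteristic) (e : A ≃* A) hz

/-- The key inductive lemma, by induction on the nilpotency class. -/
theorem aux17 (p : ℕ) (Γ : Type v) [Group Γ]
    (hH2 : ∀ (B : Type u) [CommGroup B] [MulDistribMulAction Γ B],
      (∀ b : B, ∃ m : ℕ, b ^ p ^ m = 1) →
      ∀ σ : Γ → Γ → B, (∀ s t u : Γ, s • σ t u * σ s (t * u) = σ s t * σ (s * t) u) →
      ∃ τ : Γ → B, ∀ s t : Γ, σ s t = s • τ t * τ s * (τ (s * t))⁻¹)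
    (n : ℕ) :
    ∀ (A : Type u) [Group A] [Group.IsNilpotent A],
      Group.nilpotencyClass A ≤ n →
      (∀ a : A, ∃ m : ℕ, a ^ p ^ m = 1) →
      ∀ (f : Γ → MulAut A) (g : Γ → Γ → A),
        (∀ s t : Γ, f s * f t = MulAut.conj (g s t) * f (s * t)) →
        (∀ s t u : Γ, f s (g t u) * g s (t * u) = g s t * g (s * t) u) →
        ∃ h : Γ → A, ∀ s t : Γ, h s * f s (h t) * g s t * (h (s * t))⁻¹ = 1 := by
  induction n with
  | zero =>
    intro A _ _ hcls hA f g hfg hcoc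
    have hsub : Subsingleton A :=
      nilpotencyClass_zero_iff_subsingleton.mp (Nat.le_zero.mp hcls)
    exact ⟨fun _ => 1, fun s t => Subsingleton.elim _ _⟩
  | succ n IH =>
    intro A _ _ hcls hA f g hfg hcoc
    classical
    set Z := Subgroup.center A with hZ
    -- the quotient by the center
    let Q := A ⧸ Z
    have hmapZ : ∀ e : MulAut A, Z.map (e : A ≃* A).toMonoidHom = Z := fun e =>
      Subgroup.characteristic_iff_map_eq.mp
        (inferInstance : (Subgroup.center A).Characteristic) (e : A ≃* A)
    -- descend f and g to the quotient
    let F : Γ → MulAut Q := fun s => QuotientGroup.congr Z Z (f s) (hmapZ (f s))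
    let G : Γ → Γ → Q := fun s t => QuotientGroup.mk (g s t)
    have hFmk : ∀ (s : Γ) (x : A), F s (QuotientGroup.mk x) = QuotientGroup.mk (f s x) :=
      fun s x => rfl
    -- pointwise version of hfg
    have hpt : ∀ (s t : Γ) (x : A),
        f s (f t x) = g s t * f (s * t) x * (g s t)⁻¹ := by
      intro s t x
      have := DFunLike.congr_fun (hfg s t) x
      simpa [MulAut.conj] using this
    have hfg' : ∀ s t : Γ, F s * F t = MulAut.conj (G s t) * F (s * t) := by
      intro s t
      ext q
      induction q using QuotientGroup.induction_on with
      | H x =>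
        show F s (F t (QuotientGroup.mk x)) =
          MulAut.conj (G s t) (F (s * t) (QuotientGroup.mk x))
        rw [hFmk, hFmk, hFmk, hpt s t x]
        rfl
    have hcoc' : ∀ s t u : Γ, F s (G t u) * G s (t * u) = G s t * G (s * t) u := by
      intro s t u
      show (QuotientGroup.mk (f s (g t u) * g s (t * u)) : Q)
        = QuotientGroup.mk (g s t * g (s * t) u)
      rw [hcoc]
    have htorQ : ∀ b : Q, ∃ m : ℕ, b ^ p ^ m = 1 := by
      intro b
      induction b using QuotientGroup.induction_on with
      | H x =>
        obtain ⟨m, hm⟩ := hA x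
        exact ⟨m, by rw [show ((QuotientGroup.mk x : Q) ^ p ^ m)
          = QuotientGroup.mk (x ^ p ^ m) from rfl, hm]; rfl⟩
    have hclsQ : Group.nilpotencyClass Q ≤ n := by
      have h1 : Group.nilpotencyClass Q = Group.nilpotencyClass A - 1 :=
        nilpotencyClass_quotient_center
      omega
    obtain ⟨h', hh'⟩ := IH Q hclsQ htorQ F G hfg' hcoc'
    -- lift h' to A
    let k : Γ → A := fun s => (h' s).out
    have hk : ∀ s, (QuotientGroup.mk (k s) : Q) = h' s := fun s => QuotientGroup.out_eq' _
    let g₂ : Γ → Γ → A := fun s t => k s * f s (k t) * g s t * (k (s * t))⁻¹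
    have hg₂Z : ∀ s t, g₂ s t ∈ Z := by
      intro s t
      rw [← QuotientGroup.eq_one_iff (N := Z)]
      show (QuotientGroup.mk (k s * f s (k t) * g s t * (k (s * t))⁻¹) : Q) = 1
      have : (QuotientGroup.mk (k s * f s (k t) * g s t * (k (s * t))⁻¹) : Q)
          = h' s * F s (h' t) * G s t * (h' (s * t))⁻¹ := by
        rw [← hk s, ← hk t, ← hk (s * t), hFmk]
        rfl
      rw [this, hh' s t]
    -- the twisted pair (f₂, g₂)
    let f₂ : Γ → MulAut A := fun s => MulAut.conj (k s) * f s
    have hf₂app : ∀ (s : Γ) (x : A), f₂ s x = k s * f s x * (k s)⁻¹ := fun s x => rfl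
    have hfg₂ : ∀ s t : Γ, f₂ s * f₂ t = MulAut.conj (g₂ s t) * f₂ (s * t) := by
      intro s t
      show MulAut.conj (k s) * f s * (MulAut.conj (k t) * f t)
        = MulAut.conj (g₂ s t) * (MulAut.conj (k (s * t)) * f (s * t))
      have e2 : g₂ s t * k (s * t) = k s * f s (k t) * g s t := by
        show k s * f s (k t) * g s t * (k (s * t))⁻¹ * k (s * t) = _
        group
      calc MulAut.conj (k s) * f s * (MulAut.conj (k t) * f t)
          = MulAut.conj (k s) * (f s * MulAut.conj (k t)) * f t := by group
        _ = MulAut.conj (k s) * (MulAut.conj (f s (k t)) * f s) * f t := by rw [conj_swap]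
        _ = (MulAut.conj (k s) * MulAut.conj (f s (k t))) * (f s * f t) := by group
        _ = MulAut.conj (k s * f s (k t)) * (MulAut.conj (g s t) * f (s * t)) := by
            rw [map_mul, hfg]
        _ = MulAut.conj (k s * f s (k t) * g s t) * f (s * t) := by simp only [map_mul]; group
        _ = MulAut.conj (g₂ s t * k (s * t)) * f (s * t) := by rw [e2]
        _ = MulAut.conj (g₂ s t) * (MulAut.conj (k (s * t)) * f (s * t)) := by
            rw [map_mul]; group
    have hf₂mul : ∀ s t : Γ, f₂ s * f₂ t = f₂ (s * t) := fun s t => by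
      rw [hfg₂ s t, conj_central (hg₂Z s t), one_mul]
    have hf₂one : f₂ 1 = 1 := by
      have h11 : f₂ 1 * f₂ 1 = f₂ 1 * 1 := by rw [hf₂mul, mul_one, mul_one]
      exact mul_left_cancel h11
    have hf₂Z : ∀ (s : Γ) (z : A), z ∈ Z → f₂ s z ∈ Z := fun s z hz => aut_center_mem _ hz
    -- the action of Γ on the center
    letI : SMul Γ ↥Z := ⟨fun s b => ⟨f₂ s (b : A), hf₂Z s (b : A) b.2⟩⟩
    have hsmul : ∀ (s : Γ) (b : ↥Z), ((s • b : ↥Z) : A) = f₂ s (b : A) := fun _ _ => rfl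
    letI : MulDistribMulAction Γ ↥Z :=
      { one_smul := fun b => Subtype.ext (by rw [hsmul, hf₂one]; rfl)
        mul_smul := fun s t b => Subtype.ext (by
          rw [hsmul, hsmul, hsmul, ← hf₂mul]; rfl)
        smul_mul := fun s b c => Subtype.ext (by
          rw [hsmul]
          show f₂ s ((b : A) * (c : A)) = f₂ s (b : A) * f₂ s (c : A)
          rw [map_mul])
        smul_one := fun s => Subtype.ext (by
          rw [hsmul]
          show f₂ s (1 : A) = (1 : A)
          rw [map_one]) }
    have htorZ : ∀ b : ↥Z, ∃ m : ℕ, b ^ p ^ m = 1 := by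
      intro b
      obtain ⟨m, hm⟩ := hA (b : A)
      exact ⟨m, Subtype.ext (by rw [SubgroupClass.coe_pow]; exact hm)⟩
    -- the central-valued 2-cocycle
    have hcoc₂ : ∀ s t u : Γ, f₂ s (g₂ t u) * g₂ s (t * u) = g₂ s t * g₂ (s * t) u := by
      intro s t u
      have e1 : f s (g₂ t u)
          = f s (k t) * f s (f t (k u)) * f s (g t u) * (f s (k (t * u)))⁻¹ := by
        show f s (k t * f t (k u) * g t u * (k (t * u))⁻¹) = _
        rw [map_mul, map_mul, map_mul, map_inv]
      calc f₂ s (g₂ t u) * g₂ s (t * u)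
          = (k s * (f s (k t) * f s (f t (k u)) * f s (g t u) * (f s (k (t * u)))⁻¹)
              * (k s)⁻¹)
            * (k s * f s (k (t * u)) * g s (t * u) * (k (s * (t * u)))⁻¹) := by
            rw [hf₂app, e1]
        _ = k s * f s (k t) * f s (f t (k u)) * (f s (g t u) * g s (t * u))
            * (k (s * (t * u)))⁻¹ := by group
        _ = k s * f s (k t) * f s (f t (k u)) * (g s t * g (s * t) u)
            * (k (s * (t * u)))⁻¹ := by rw [hcoc]
        _ = k s * f s (k t) * (g s t * f (s * t) (k u) * (g s t)⁻¹) * (g s t * g (s * t) u)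
            * (k (s * (t * u)))⁻¹ := by rw [hpt]
        _ = (k s * f s (k t) * g s t * (k (s * t))⁻¹)
            * (k (s * t) * f (s * t) (k u) * g (s * t) u * (k (s * t * u))⁻¹) := by
            rw [← mul_assoc s t u]; group
        _ = g₂ s t * g₂ (s * t) u := rfl
    let σ : Γ → Γ → ↥Z := fun s t => ⟨g₂ s t, hg₂Z s t⟩
    have hσ : ∀ s t u : Γ, s • σ t u * σ s (t * u) = σ s t * σ (s * t) u := by
      intro s t u
      exact Subtype.ext (hcoc₂ s t u)
    open scoped IsMulCommutative in
    obtain ⟨τ, hτ⟩ := hH2 ↥Z htorZ σ hσ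
    -- facts about centrality
    have hcomm : ∀ z : A, z ∈ Z → ∀ a : A, a * z = z * a := fun z hz a =>
      Subgroup.mem_center_iff.mp hz a
    have hfτ : ∀ s t : Γ, f s ((τ t : A)) ∈ Z := fun s t => aut_center_mem (f s) (τ t).2
    have hact : ∀ s t : Γ, ((s • τ t : ↥Z) : A) = f s ((τ t : A)) := by
      intro s t
      rw [hsmul, hf₂app, hcomm _ (hfτ s t) (k s)]
      group
    have hg2eq : ∀ s t : Γ, k s * f s (k t) * g s t * (k (s * t))⁻¹
        = f s ((τ t : A)) * (τ s : A) * ((τ (s * t) : A))⁻¹ := by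
      intro s t
      have hc := congrArg (Subtype.val) (hτ s t)
      push_cast at hc
      rw [hact] at hc
      exact hc
    refine ⟨fun s => (τ s : A)⁻¹ * k s, fun s t => ?_⟩
    have h2' : k s * f s (k t) * g s t
        = f s ((τ t : A)) * (τ s : A) * ((τ (s * t) : A))⁻¹ * k (s * t) := by
      have := congrArg (· * k (s * t)) (hg2eq s t)
      simpa [mul_assoc] using this
    have key : (τ s : A)⁻¹ * k s * (f s ((τ t : A)⁻¹ * k t)) * g s t
        = (τ (s * t) : A)⁻¹ * k (s * t) := by
      calc (τ s : A)⁻¹ * k s * (f s ((τ t : A)⁻¹ * k t)) * g s t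
          = (τ s : A)⁻¹ * (k s * (f s ((τ t : A)))⁻¹) * f s (k t) * g s t := by
            rw [map_mul, map_inv]; group
        _ = (τ s : A)⁻¹ * ((f s ((τ t : A)))⁻¹ * k s) * f s (k t) * g s t := by
            rw [hcomm _ (inv_mem (hfτ s t)) (k s)]
        _ = (τ s : A)⁻¹ * (f s ((τ t : A)))⁻¹ * (k s * f s (k t) * g s t) := by group
        _ = (τ s : A)⁻¹ * (f s ((τ t : A)))⁻¹
            * (f s ((τ t : A)) * (τ s : A) * ((τ (s * t) : A))⁻¹ * k (s * t)) := by rw [h2']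
        _ = (τ (s * t) : A)⁻¹ * k (s * t) := by group
    rw [key]
    group


end Aux

/-- Let `Γ` be a group and `A` a nilpotent group in which every element has `p`-power order.
Assume `H²(Γ, B) = 0` for every abelian `p`-power-torsion group `B` with `Γ`-action (stated
concretely: every 2-cocycle is a coboundary). Then every nonabelian 2-cocycle pair `(f, g)`
with values in `A` is equivalent to one of the form `(f', 1)`; in particular `f'` is a
homomorphism `Γ → Aut A`. -/
theorem stmt17 (p : ℕ) (hp : p.Prime) (Γ : Type v) [Group Γ] (A : Type u) [Group A]
    [Group.IsNilpotent A] (hA : ∀ a : A, ∃ m : ℕ, a ^ p ^ m = 1)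
    (hH2 : ∀ (B : Type u) [CommGroup B] [MulDistribMulAction Γ B],
      (∀ b : B, ∃ m : ℕ, b ^ p ^ m = 1) →
      ∀ σ : Γ → Γ → B, (∀ s t u : Γ, s • σ t u * σ s (t * u) = σ s t * σ (s * t) u) →
      ∃ τ : Γ → B, ∀ s t : Γ, σ s t = s • τ t * τ s * (τ (s * t))⁻¹)
    (f : Γ → MulAut A) (g : Γ → Γ → A)
    (hfg : ∀ s t : Γ, f s * f t = MulAut.conj (g s t) * f (s * t))
    (hcoc : ∀ s t u : Γ, f s (g t u) * g s (t * u) = g s t * g (s * t) u) :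
    ∃ h : Γ → A,
      (∀ s t : Γ, h s * f s (h t) * g s t * (h (s * t))⁻¹ = 1) ∧
      (∀ s t : Γ, (MulAut.conj (h s) * f s) * (MulAut.conj (h t) * f t)
        = MulAut.conj (h (s * t)) * f (s * t)) := by
  obtain ⟨h, hh⟩ := aux17 p Γ hH2 (Group.nilpotencyClass A) A le_rfl hA f g hfg hcoc
  refine ⟨h, hh, fun s t => ?_⟩
  have h1 : h s * f s (h t) * g s t = h (s * t) := by
    have := hh s t
    rwa [mul_inv_eq_one] at this
  calc (MulAut.conj (h s) * f s) * (MulAut.conj (h t) * f t)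
      = MulAut.conj (h s) * (f s * MulAut.conj (h t)) * f t := by group
    _ = MulAut.conj (h s) * (MulAut.conj (f s (h t)) * f s) * f t := by rw [conj_swap]
    _ = (MulAut.conj (h s) * MulAut.conj (f s (h t))) * (f s * f t) := by group
    _ = MulAut.conj (h s * f s (h t)) * (MulAut.conj (g s t) * f (s * t)) := by
        rw [map_mul, hfg]
    _ = MulAut.conj (h s * f s (h t) * g s t) * f (s * t) := by
        simp only [map_mul]; group
    _ = MulAut.conj (h (s * t)) * f (s * t) := by rw [h1]
end

section
/- Let H ≤ E be groups with H normal in E, and suppose Z ≤ H is a subgroup that is central in E. Let f, f̄ : Γ → E be two functions from a group Γ such that f̄(s)·f(s)⁻¹ ∈ H for all s, and define g(s,t) = f(s)f(t)f(st)⁻¹, ḡ(s,t) = f̄(s)f̄(t)f̄(st)⁻¹. If g(s,t) ∈ Z and ḡ(s,t) ∈ Z for all s,t ∈ Γ, and j(s) := f̄(s)·f(s)⁻¹, then the function j̄ : Γ → H/Z, j̄(s) = j(s)·Z satisfies the 1-cocycle identity j̄(s) · (f(s) j(t) f(s)⁻¹)·Z = j̄(st) · ḡ(s,t)⁻¹g(s,t)·Z,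 and in particular if ḡ = g then j̄ is a crossed homomorphism for the conjugation action induced by f on H/Z. -/
/-- Let `H ⊴ E` be groups with `Z ≤ H` central in `E`. Given `f, f̄ : Γ → E` with
`f̄(s)·f(s)⁻¹ ∈ H`, whose failure terms `g(s,t) = f(s)f(t)f(st)⁻¹` and
`ḡ(s,t) = f̄(s)f̄(t)f̄(st)⁻¹` take values in `Z`, the function `j(s) = f̄(s)·f(s)⁻¹`
satisfies, modulo `Z`, the 1-cocycle identity
`j(s)·(f(s)j(t)f(s)⁻¹) ≡ j(st)·ḡ(s,t)⁻¹g(s,t) (mod Z)`; in particular if `ḡ = g` then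
`j mod Z` is a crossed homomorphism for the conjugation action of `f` on `H/Z`. -/
theorem stmt18 (Γ E : Type*) [Group Γ] [Group E]
    (H Z : Subgroup E) (hHnorm : H.Normal) (hZH : Z ≤ H) (hZcent : Z ≤ Subgroup.center E)
    (f fb : Γ → E) (hfH : ∀ s : Γ, fb s * (f s)⁻¹ ∈ H)
    (g gb : Γ → Γ → E) (j : Γ → E)
    (hg : ∀ s t : Γ, g s t = f s * f t * (f (s * t))⁻¹)
    (hgb : ∀ s t : Γ, gb s t = fb s * fb t * (fb (s * t))⁻¹)
    (hgZ : ∀ s t : Γ, g s t ∈ Z) (hgbZ : ∀ s t : Γ, gb s t ∈ Z)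
    (hj : ∀ s : Γ, j s = fb s * (f s)⁻¹) :
    (∀ s t : Γ,
      (j s * (f s * j t * (f s)⁻¹))⁻¹ * (j (s * t) * ((gb s t)⁻¹ * g s t)) ∈ Z) ∧
    ((∀ s t : Γ, gb s t = g s t) →
      ∀ s t : Γ, (j (s * t))⁻¹ * (j s * (f s * j t * (f s)⁻¹)) ∈ Z) := by

  have hZnorm : Z.Normal := by
    constructor
    intro z hz x
    have hc := (Subgroup.mem_center_iff.mp (hZcent hz)) x
    have : x * z * x⁻¹ = z := by rw [hc]; group
    rw [this]; exact hz
  have key : ∀ s t : Γ,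
      (j s * (f s * j t * (f s)⁻¹))⁻¹ * (j (s * t) * ((gb s t)⁻¹ * g s t)) ∈ Z := by
    intro s t
    rw [← QuotientGroup.eq_one_iff (N := Z)]
    have hg1 : ((g s t : E) : E ⧸ Z) = 1 := (QuotientGroup.eq_one_iff _).mpr (hgZ s t)
    have hgb1 : ((gb s t : E) : E ⧸ Z) = 1 := (QuotientGroup.eq_one_iff _).mpr (hgbZ s t)
    have e1 : f s * f t = g s t * f (s * t) := by rw [hg]; group
    have e2 : fb s * fb t = gb s t * fb (s * t) := by rw [hgb]; group
    have hfst : ((f (s * t) : E) : E ⧸ Z) = (f s : E ⧸ Z) * (f t : E ⧸ Z) := by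
      have := congrArg (fun x : E => (x : E ⧸ Z)) e1
      simpa [hg1] using this.symm
    have hfbst : ((fb (s * t) : E) : E ⧸ Z) = (fb s : E ⧸ Z) * (fb t : E ⧸ Z) := by
      have := congrArg (fun x : E => (x : E ⧸ Z)) e2
      simpa [hgb1] using this.symm
    simp only [hj, QuotientGroup.mk_mul, QuotientGroup.mk_inv, hfst, hfbst, hg1, hgb1]
    group
  refine ⟨key, fun hgg s t => ?_⟩
  have h := key s t
  rw [hgg, inv_mul_cancel, mul_one] at h
  simpa using Z.inv_mem h
end
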